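/- arXiv:2207.05489 — 3 statements merged into one kernel-verified Lean document; each statement's English description precedes it below -/
import Mathlib

section
/- Suppose there exists ε > 0 with E^Q[e^{ε ℓ(Z^{(1)})}] < ∞ and E^Q[e^{ε Z^{(2)}}] < ∞. Then, under the reference measure Q, for any 0 ≤ u ≤ t ≤ T with t − u ≤ ε one has E^Q[exp(∫_u^t λ_{s−} ds)] < ∞, where λ is the dynamic contagion intensity. -/
/-!
On `(u, t] ⊆ [0, t]` every exponential kernel is at most `1` and the counts are nondecreasing, so
the intensity is at most `max λ₀ β` plus the sum of all marks of the jumps up to time `t`. As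
`t - u ≤ ε`, this gives pathwise
`exp (∫_u^t λ) ≤ e^{ε max λ₀ β} ∏_{j < N¹_t} e^{ε ℓ(Z¹_j)} ∏_{j < N²_t} e^{ε Z²_j}`.
The two products are independent, and each is a compound Poisson exponential functional:
conditioning on the Poisson count, `E[∏_{j < N} f(Z_j)] = exp(c (E f(Z_0) - 1))`, which is finite
by the exponential moment assumptions.
-/

open MeasureTheory ProbabilityTheory Real
open scoped ENNReal Nat

lemma prod_range_eq_tsum_indicator {Ω : Type*} (N : Ω → ℕ) (g : ℕ → Ω → ℝ≥0∞) (ω : Ω) :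
    ∏ j ∈ Finset.range (N ω), g j ω
      = ∑' k, {ω' | N ω' = k}.indicator (fun ω' => ∏ j ∈ Finset.range k, g j ω') ω := by
  rw [tsum_eq_single (N ω), Set.indicator_of_mem (s := {ω' | N ω' = N ω}) rfl]
  exact fun k hk => Set.indicator_of_notMem (fun h => hk h.symm) _

lemma tsum_ofReal_poisson_mul_pow {c r : ℝ} (hc : 0 ≤ c) (hr : 0 ≤ r) :
    ∑' k, ENNReal.ofReal (exp (-c) * c ^ k / k !) * ENNReal.ofReal r ^ k
      = ENNReal.ofReal (exp (c * (r - 1))) := by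
  have hsum : HasSum (fun k : ℕ => exp (-c) * (c * r) ^ k / k !) (exp (c * (r - 1))) := by
    have h := (NormedSpace.expSeries_div_hasSum_exp (c * r)).mul_left (exp (-c))
    rw [← exp_eq_exp_ℝ, ← exp_add, show -c + c * r = c * (r - 1) by ring] at h
    simpa only [mul_div_assoc] using h
  have hterm : ∀ k : ℕ, ENNReal.ofReal (exp (-c) * c ^ k / k !) * ENNReal.ofReal r ^ k
      = ENNReal.ofReal (exp (-c) * (c * r) ^ k / k !) := fun k => by
    rw [← ENNReal.ofReal_pow hr, ← ENNReal.ofReal_mul (by positivity)]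
    ring_nf
  simp_rw [hterm]
  rw [← ENNReal.ofReal_tsum_of_nonneg (fun k => by positivity) hsum.summable, hsum.tsum_eq]

namespace ProbabilityTheory

variable {Ω : Type*} {mΩ : MeasurableSpace Ω} {μ : Measure Ω}

theorem iIndep.lintegral_mul_of_disjoint {ι : Type*} {m : ι → MeasurableSpace Ω}
    (h_le : ∀ i, m i ≤ mΩ) (h : iIndep m μ) {i j k l : ι}
    (hdisj : Disjoint ({i, k} : Set ι) {j, l}) {f g : Ω → ℝ≥0∞} (hf : Measurable[m i ⊔ m k] f)
    (hg : Measurable[m j ⊔ m l] g) : ∫⁻ ω, f ω * g ω ∂μ = (∫⁻ ω, f ω ∂μ) * ∫⁻ ω, g ω ∂μ := by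
  have hind : Indep (m i ⊔ m k) (m j ⊔ m l) μ := by
    simpa only [iSup_insert, iSup_singleton] using indep_iSup_of_disjoint h_le h hdisj
  exact lintegral_mul_eq_lintegral_mul_lintegral_of_independent_measurableSpace
    (sup_le (h_le i) (h_le k)) (sup_le (h_le j) (h_le l)) hind hf hg

lemma measurable_prod_range_count {m : MeasurableSpace Ω} {N : Ω → ℕ} (hN : Measurable[m] N)
    {g : ℕ → Ω → ℝ≥0∞} (hg : ∀ j, Measurable[m] (g j)) :
    Measurable[m] fun ω => ∏ j ∈ Finset.range (N ω), g j ω := by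
  simp_rw [prod_range_eq_tsum_indicator N g]
  exact Measurable.tsum fun k =>
    (Finset.measurable_prod _ fun j _ => hg j).indicator (hN (measurableSet_singleton k))

lemma measurable_prod_range_comap_sup {ι E : Type*} [MeasurableSpace E] (N : ι → Ω → ℕ)
    (Z : ℕ → Ω → E) (t : ι) {f : E → ℝ≥0∞} (hf : Measurable f) :
    Measurable[MeasurableSpace.comap (fun ω s => N s ω) inferInstance
        ⊔ MeasurableSpace.comap (fun ω n => Z n ω) inferInstance]
      fun ω => ∏ j ∈ Finset.range (N t ω), f (Z j ω) :=
  measurable_prod_range_count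
    (((measurable_pi_apply t).comp (comap_measurable fun ω s => N s ω)).mono le_sup_left le_rfl)
    fun j => hf.comp
      (((measurable_pi_apply j).comp (comap_measurable fun ω n => Z n ω)).mono le_sup_right le_rfl)

lemma lintegral_prod_range_eq_tsum_of_indep {mN mG : MeasurableSpace Ω} (hmN : mN ≤ mΩ)
    (hmG : mG ≤ mΩ) (hind : Indep mN mG μ) {N : Ω → ℕ} (hN : Measurable[mN] N)
    {g : ℕ → Ω → ℝ≥0∞} (hg : ∀ j, Measurable[mG] (g j)) (hiid : iIndepFun g μ) :
    ∫⁻ ω, ∏ j ∈ Finset.range (N ω), g j ω ∂μ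
      = ∑' k, μ {ω | N ω = k} * ∏ j ∈ Finset.range k, ∫⁻ ω, g j ω ∂μ := by
  have hNk : ∀ k, MeasurableSet[mN] {ω | N ω = k} := fun k => hN (measurableSet_singleton k)
  have hprod : ∀ k, Measurable[mG] fun ω => ∏ j ∈ Finset.range k, g j ω := fun k =>
    Finset.measurable_prod _ fun j _ => hg j
  simp_rw [prod_range_eq_tsum_indicator N g]
  rw [lintegral_tsum fun k =>
    (((hprod k).mono hmG le_rfl).indicator (hmN _ (hNk k))).aemeasurable]
  refine tsum_congr fun k => ?_
  have hsplit : ∀ ω, {ω' | N ω' = k}.indicator (fun ω' => ∏ j ∈ Finset.range k, g j ω') ω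
      = {ω' | N ω' = k}.indicator 1 ω * ∏ j ∈ Finset.range k, g j ω := fun ω => by
    simp [Set.indicator_apply]
  simp_rw [hsplit]
  rw [lintegral_mul_eq_lintegral_mul_lintegral_of_independent_measurableSpace hmN hmG hind
      (Measurable.indicator (f := 1) measurable_const (hNk k)) (hprod k),
    lintegral_prod_eq_prod_lintegral_of_indepFun _ _ hiid fun j => (hg j).mono hmG le_rfl,
    lintegral_indicator_one (hmN _ (hNk k))]

theorem lintegral_prod_range_comp_eq_exp_of_poisson {N : Ω → ℕ} (hN : Measurable N) {c : ℝ}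
    (hc : 0 ≤ c) (hpois : ∀ k : ℕ, μ {ω | N ω = k} = ENNReal.ofReal (exp (-c) * c ^ k / k !))
    {E : Type*} [MeasurableSpace E] {Z : ℕ → Ω → E} (hZ : ∀ j, Measurable (Z j))
    (hind : IndepFun N (fun ω j => Z j ω) μ) (hiid : iIndepFun Z μ)
    (hid : ∀ j, μ.map (Z j) = μ.map (Z 0)) {f : E → ℝ≥0∞} (hf : Measurable f)
    (hf_fin : ∫⁻ ω, f (Z 0 ω) ∂μ ≠ ∞) :
    ∫⁻ ω, ∏ j ∈ Finset.range (N ω), f (Z j ω) ∂μ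
      = ENNReal.ofReal (exp (c * ((∫⁻ ω, f (Z 0 ω) ∂μ).toReal - 1))) := by
  have hfZ : ∀ j, ∫⁻ ω, f (Z j ω) ∂μ = ∫⁻ ω, f (Z 0 ω) ∂μ := fun j => by
    rw [← lintegral_map hf (hZ j), hid j, lintegral_map hf (hZ 0)]
  rw [lintegral_prod_range_eq_tsum_of_indep (g := fun j ω => f (Z j ω)) hN.comap_le
    (measurable_pi_lambda _ hZ).comap_le hind (comap_measurable N)
    (fun j => hf.comp ((measurable_pi_apply j).comp (comap_measurable fun ω j => Z j ω)))
    (hiid.comp (fun _ => f) fun _ => hf)]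
  simp_rw [hfZ, Finset.prod_const, Finset.card_range, hpois]
  have h := tsum_ofReal_poisson_mul_pow hc (ENNReal.toReal_nonneg (a := ∫⁻ ω, f (Z 0 ω) ∂μ))
  rwa [ENNReal.ofReal_toReal hf_fin] at h

end ProbabilityTheory

lemma monotone_of_lt_iff_le {N : ℝ → ℕ} {τ : ℕ → ℝ} (hτ : ∀ t n, n < N t ↔ τ n ≤ t) :
    Monotone N := fun s t hst => by
  by_contra! h
  exact lt_irrefl _ ((hτ t _).mpr (((hτ s _).mp h).trans hst))

lemma add_sub_mul_exp_neg_le_max {α s : ℝ} (hα : 0 ≤ α) (hs : 0 ≤ s) (a b : ℝ) :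
    b + (a - b) * exp (-(α * s)) ≤ max a b := by
  have h0 : 0 ≤ exp (-(α * s)) := (exp_pos _).le
  have h1 : exp (-(α * s)) ≤ 1 := exp_le_one_iff.mpr (by nlinarith)
  rcases le_total a b with hab | hab
  · nlinarith [le_max_right a b]
  · nlinarith [le_max_left a b]

lemma sum_range_exp_decay_le {N : ℝ → ℕ} {τ : ℕ → ℝ} (hτ : ∀ t n, n < N t ↔ τ n ≤ t)
    {α : ℝ} (hα : 0 ≤ α) {w : ℕ → ℝ} (hw : ∀ j, 0 ≤ w j) {s t : ℝ} (hst : s ≤ t) :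
    ∑ j ∈ Finset.range (N s), exp (-(α * (s - τ j))) * w j ≤ ∑ j ∈ Finset.range (N t), w j :=
  calc ∑ j ∈ Finset.range (N s), exp (-(α * (s - τ j))) * w j
      ≤ ∑ j ∈ Finset.range (N s), w j := Finset.sum_le_sum fun j hj => by
        have hτj : τ j ≤ s := (hτ s j).mp (Finset.mem_range.mp hj)
        have h1 : exp (-(α * (s - τ j))) ≤ 1 :=
          exp_le_one_iff.mpr (neg_nonpos.mpr (mul_nonneg hα (sub_nonneg.mpr hτj)))
        simpa using mul_le_mul_of_nonneg_right h1 (hw j)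
    _ ≤ ∑ j ∈ Finset.range (N t), w j := Finset.sum_le_sum_of_subset_of_nonneg
        (Finset.range_subset_range.mpr (monotone_of_lt_iff_le hτ hst)) fun j _ _ => hw j

lemma setIntegral_Ioc_le_mul_of_le {f : ℝ → ℝ} {u t ε B : ℝ} (hut : u ≤ t) (htu : t - u ≤ ε)
    (hB : 0 ≤ B) (hf : ∀ s ∈ Set.Ioc u t, f s ≤ B) : ∫ s in Set.Ioc u t, f s ≤ ε * B := by
  by_cases hint : IntegrableOn f (Set.Ioc u t)
  · calc ∫ s in Set.Ioc u t, f s ≤ ∫ _ in Set.Ioc u t, B :=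
          setIntegral_mono_on hint (integrableOn_const (by simp)) measurableSet_Ioc hf
      _ = (t - u) * B := by simp [hut]
      _ ≤ ε * B := mul_le_mul_of_nonneg_right htu hB
  · rw [integral_undef hint]
    exact mul_nonneg ((sub_nonneg.mpr hut).trans htu) hB

lemma ENNReal.ofReal_exp_mul_sum {ι : Type*} (s : Finset ι) (ε : ℝ) (f : ι → ℝ) :
    ENNReal.ofReal (exp (ε * ∑ j ∈ s, f j)) = ∏ j ∈ s, ENNReal.ofReal (exp (ε * f j)) := by
  rw [Finset.mul_sum, exp_sum, ENNReal.ofReal_prod_of_nonneg fun j _ => (exp_pos _).le]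

noncomputable def contagionIntensity (α β lam0 : ℝ) (ℓ : ℝ → ℝ) (N1 N2 : ℝ → ℕ)
    (T1 T2 Z1 Z2 : ℕ → ℝ) (t : ℝ) : ℝ :=
  β + (lam0 - β) * exp (-(α * t))
    + ∑ j ∈ Finset.range (N1 t), exp (-(α * (t - T1 j))) * ℓ (Z1 j)
    + ∑ j ∈ Finset.range (N2 t), exp (-(α * (t - T2 j))) * Z2 j

section ContagionIntensity

variable {α β lam0 : ℝ} (hα : 0 ≤ α) {ℓ : ℝ → ℝ} (hℓ : ∀ z, 0 ≤ ℓ z) {N1 N2 : ℝ → ℕ}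
  {T1 T2 Z1 Z2 : ℕ → ℝ} (hZ2 : ∀ j, 0 ≤ Z2 j) (hτ1 : ∀ t n, n < N1 t ↔ T1 n ≤ t)
  (hτ2 : ∀ t n, n < N2 t ↔ T2 n ≤ t)
include hα hℓ hZ2 hτ1 hτ2

lemma contagionIntensity_le {s t : ℝ} (hs : 0 ≤ s) (hst : s ≤ t) :
    contagionIntensity α β lam0 ℓ N1 N2 T1 T2 Z1 Z2 s
      ≤ max lam0 β + ∑ j ∈ Finset.range (N1 t), ℓ (Z1 j) + ∑ j ∈ Finset.range (N2 t), Z2 j := by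
  unfold contagionIntensity
  linarith [add_sub_mul_exp_neg_le_max hα hs lam0 β,
    sum_range_exp_decay_le hτ1 hα (fun j => hℓ (Z1 j)) hst,
    sum_range_exp_decay_le hτ2 hα hZ2 hst]

lemma ofReal_exp_integral_contagionIntensity_le (hβ : 0 ≤ β) {u t ε : ℝ} (hu : 0 ≤ u)
    (hut : u ≤ t) (htu : t - u ≤ ε) :
    ENNReal.ofReal (exp (∫ s in Set.Ioc u t, contagionIntensity α β lam0 ℓ N1 N2 T1 T2 Z1 Z2 s))
      ≤ ENNReal.ofReal (exp (ε * max lam0 β))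
        * ((∏ j ∈ Finset.range (N1 t), ENNReal.ofReal (exp (ε * ℓ (Z1 j))))
          * ∏ j ∈ Finset.range (N2 t), ENNReal.ofReal (exp (ε * Z2 j))) := by
  have hB : 0 ≤ max lam0 β + ∑ j ∈ Finset.range (N1 t), ℓ (Z1 j)
      + ∑ j ∈ Finset.range (N2 t), Z2 j := by
    have := Finset.sum_nonneg fun j (_ : j ∈ Finset.range (N1 t)) => hℓ (Z1 j)
    have := Finset.sum_nonneg fun j (_ : j ∈ Finset.range (N2 t)) => hZ2 j
    linarith [le_max_right lam0 β]
  have hint := setIntegral_Ioc_le_mul_of_le hut htu hB fun s hs =>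
    contagionIntensity_le hα hℓ hZ2 hτ1 hτ2 (hu.trans hs.1.le) hs.2
  calc _ ≤ ENNReal.ofReal (exp (ε * (max lam0 β + ∑ j ∈ Finset.range (N1 t), ℓ (Z1 j)
          + ∑ j ∈ Finset.range (N2 t), Z2 j))) := ENNReal.ofReal_le_ofReal (exp_le_exp.mpr hint)
    _ = _ := by
      rw [mul_add, mul_add, exp_add, exp_add, ENNReal.ofReal_mul (by positivity),
        ENNReal.ofReal_mul (by positivity), ENNReal.ofReal_exp_mul_sum,
        ENNReal.ofReal_exp_mul_sum, mul_assoc]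

end ContagionIntensity

theorem finite_exponential_moment_integrated_intensity_general
    {Ω : Type*} {mΩ : MeasurableSpace Ω} (μ : Measure Ω)
    (α β lam0 ρ T : ℝ) (hα : 0 < α) (hβ : 0 < β) (hρ : 0 < ρ)
    (ℓ : ℝ → ℝ) (hℓmeas : Measurable ℓ) (hℓpos : ∀ z, 0 ≤ ℓ z)
    (N1 N2 : ℝ → Ω → ℕ) (T1 T2 Z1 Z2 : ℕ → Ω → ℝ)
    (hN1meas : ∀ t, Measurable (N1 t)) (hN2meas : ∀ t, Measurable (N2 t))
    (hZ1meas : ∀ n, Measurable (Z1 n)) (hZ2meas : ∀ n, Measurable (Z2 n))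
    (hZ2pos : ∀ n ω, 0 ≤ Z2 n ω)
    -- the `T^{(i)}` enumerate the jump times of `N^{(i)}`
    (hτ1 : ∀ t : ℝ, ∀ ω, ∀ n : ℕ, n < N1 t ω ↔ T1 n ω ≤ t)
    (hτ2 : ∀ t : ℝ, ∀ ω, ∀ n : ℕ, n < N2 t ω ↔ T2 n ω ≤ t)
    -- Poisson marginals: `N¹` standard, `N²` of rate `ρ`
    (hP1 : ∀ t : ℝ, 0 ≤ t → ∀ k : ℕ,
      μ {ω | N1 t ω = k} = ENNReal.ofReal (Real.exp (-t) * t ^ k / k.factorial))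
    (hP2 : ∀ t : ℝ, 0 ≤ t → ∀ k : ℕ,
      μ {ω | N2 t ω = k} = ENNReal.ofReal (Real.exp (-(ρ * t)) * (ρ * t) ^ k / k.factorial))
    -- the mark sequences are i.i.d.
    (hiid1 : iIndepFun (fun n => Z1 n) μ)
    (hid1 : ∀ n, μ.map (Z1 n) = μ.map (Z1 0))
    (hiid2 : iIndepFun (fun n => Z2 n) μ)
    (hid2 : ∀ n, μ.map (Z2 n) = μ.map (Z2 0))
    -- mutual independence of `N¹`, `N²`, `{Z¹_n}`, `{Z²_n}`
    (hindep : iIndep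
      (![MeasurableSpace.comap (fun ω => fun t : ℝ => N1 t ω) inferInstance,
         MeasurableSpace.comap (fun ω => fun t : ℝ => N2 t ω) inferInstance,
         MeasurableSpace.comap (fun ω => fun n : ℕ => Z1 n ω) inferInstance,
         MeasurableSpace.comap (fun ω => fun n : ℕ => Z2 n ω) inferInstance]) μ)
    -- finite exponential moments of order `ε`
    (ε : ℝ)
    (hexpℓ : Integrable (fun ω => Real.exp (ε * ℓ (Z1 0 ω))) μ)
    (hexpZ2 : Integrable (fun ω => Real.exp (ε * Z2 0 ω)) μ)
    -- the dynamic contagion intensity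
    (lam : ℝ → Ω → ℝ)
    (hlam : ∀ t ω, lam t ω
      = β + (lam0 - β) * Real.exp (-(α * t))
        + ∑ j ∈ Finset.range (N1 t ω), Real.exp (-(α * (t - T1 j ω))) * ℓ (Z1 j ω)
        + ∑ j ∈ Finset.range (N2 t ω), Real.exp (-(α * (t - T2 j ω))) * Z2 j ω) :
    ∀ u t : ℝ, 0 ≤ u → u ≤ t → t ≤ T → t - u ≤ ε →
      ∫⁻ ω, ENNReal.ofReal (Real.exp (∫ s in Set.Ioc u t, lam s ω)) ∂μ < ⊤ := by
  intro u t hu hut _ htu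
  have ht : 0 ≤ t := hu.trans hut
  set F1 : Ω → ℝ≥0∞ := fun ω =>
    ∏ j ∈ Finset.range (N1 t ω), ENNReal.ofReal (exp (ε * ℓ (Z1 j ω)))
  set F2 : Ω → ℝ≥0∞ := fun ω => ∏ j ∈ Finset.range (N2 t ω), ENNReal.ofReal (exp (ε * Z2 j ω))
  have hf1 : Measurable fun x => ENNReal.ofReal (exp (ε * ℓ x)) := by fun_prop
  have hf2 : Measurable fun x => ENNReal.ofReal (exp (ε * x)) := by fun_prop
  have hpath : ∀ ω, ENNReal.ofReal (exp (∫ s in Set.Ioc u t, lam s ω))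
      ≤ ENNReal.ofReal (exp (ε * max lam0 β)) * (F1 ω * F2 ω) := fun ω => by
    rw [show (fun s => lam s ω) = contagionIntensity α β lam0 ℓ (N1 · ω) (N2 · ω) (T1 · ω)
      (T2 · ω) (Z1 · ω) (Z2 · ω) from funext (hlam · ω)]
    exact ofReal_exp_integral_contagionIntensity_le hα.le hℓpos (hZ2pos · ω) (hτ1 · ω) (hτ2 · ω)
      hβ.le hu hut htu
  have hF : ∫⁻ ω, F1 ω * F2 ω ∂μ = (∫⁻ ω, F1 ω ∂μ) * ∫⁻ ω, F2 ω ∂μ :=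
    hindep.lintegral_mul_of_disjoint (i := 0) (k := 2) (j := 1) (l := 3)
      (fun i => by fin_cases i <;> exact Measurable.comap_le (by fun_prop)) (by simp)
      (measurable_prod_range_comap_sup N1 Z1 t hf1) (measurable_prod_range_comap_sup N2 Z2 t hf2)
  have hind1 : IndepFun (fun ω s => N1 s ω) (fun ω n => Z1 n ω) μ :=
    hindep.indep (show (0 : Fin 4) ≠ 2 by decide)
  have hind2 : IndepFun (fun ω s => N2 s ω) (fun ω n => Z2 n ω) μ :=
    hindep.indep (show (1 : Fin 4) ≠ 3 by decide)
  have hF1 := lintegral_prod_range_comp_eq_exp_of_poisson (hN1meas t) ht (hP1 t ht) hZ1meas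
    (hind1.comp (measurable_pi_apply t) measurable_id) hiid1 hid1 hf1 hexpℓ.lintegral_lt_top.ne
  have hF2 := lintegral_prod_range_comp_eq_exp_of_poisson (hN2meas t) (mul_nonneg hρ.le ht)
    (hP2 t ht) hZ2meas (hind2.comp (measurable_pi_apply t) measurable_id) hiid2 hid2 hf2
    hexpZ2.lintegral_lt_top.ne
  calc _ ≤ ∫⁻ ω, ENNReal.ofReal (exp (ε * max lam0 β)) * (F1 ω * F2 ω) ∂μ := lintegral_mono hpath
    _ < ⊤ := by
      rw [lintegral_const_mul' _ _ ENNReal.ofReal_ne_top, hF, hF1, hF2]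
      finiteness

/-- **Finite exponential moment of the integrated intensity under the reference measure.**
Suppose there exists `ε > 0` with `E^Q[e^{ε ℓ(Z¹)}] < ∞` and `E^Q[e^{ε Z²}] < ∞`.  Then, under
the reference measure `Q` (here `μ`, under which `N¹` is a standard Poisson process, `N²` is
Poisson of rate `ρ`, and `N¹, N², {Z¹_n}, {Z²_n}` are mutually independent), for any
`0 ≤ u ≤ t ≤ T` with `t − u ≤ ε` one has `E^Q[exp(∫_u^t λ_s ds)] < ∞`, where `λ` is the
dynamic contagion intensity. -/
theorem finite_exponential_moment_integrated_intensity
    {Ω : Type*} {mΩ : MeasurableSpace Ω} (μ : Measure Ω) [IsProbabilityMeasure μ]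
    (α β lam0 ρ T : ℝ) (hα : 0 < α) (hβ : 0 < β) (hlam0 : 0 < lam0) (hρ : 0 < ρ) (hT : 0 < T)
    (ℓ : ℝ → ℝ) (hℓmeas : Measurable ℓ) (hℓpos : ∀ z, 0 ≤ ℓ z)
    (N1 N2 : ℝ → Ω → ℕ) (T1 T2 Z1 Z2 : ℕ → Ω → ℝ)
    (hN1meas : ∀ t, Measurable (N1 t)) (hN2meas : ∀ t, Measurable (N2 t))
    (hZ1meas : ∀ n, Measurable (Z1 n)) (hZ2meas : ∀ n, Measurable (Z2 n))
    (hT1meas : ∀ n, Measurable (T1 n)) (hT2meas : ∀ n, Measurable (T2 n))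
    (hZ1pos : ∀ n ω, 0 ≤ Z1 n ω) (hZ2pos : ∀ n ω, 0 ≤ Z2 n ω)
    -- the `T^{(i)}` enumerate the jump times of `N^{(i)}`
    (hτ1 : ∀ t : ℝ, ∀ ω, ∀ n : ℕ, n < N1 t ω ↔ T1 n ω ≤ t)
    (hτ2 : ∀ t : ℝ, ∀ ω, ∀ n : ℕ, n < N2 t ω ↔ T2 n ω ≤ t)
    (hT1pos : ∀ n ω, 0 < T1 n ω) (hT2pos : ∀ n ω, 0 < T2 n ω)
    -- Poisson marginals: `N¹` standard, `N²` of rate `ρ`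
    (hP1 : ∀ t : ℝ, 0 ≤ t → ∀ k : ℕ,
      μ {ω | N1 t ω = k} = ENNReal.ofReal (Real.exp (-t) * t ^ k / k.factorial))
    (hP2 : ∀ t : ℝ, 0 ≤ t → ∀ k : ℕ,
      μ {ω | N2 t ω = k} = ENNReal.ofReal (Real.exp (-(ρ * t)) * (ρ * t) ^ k / k.factorial))
    -- the mark sequences are i.i.d.
    (hiid1 : iIndepFun (fun n => Z1 n) μ)
    (hid1 : ∀ n, μ.map (Z1 n) = μ.map (Z1 0))
    (hiid2 : iIndepFun (fun n => Z2 n) μ)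
    (hid2 : ∀ n, μ.map (Z2 n) = μ.map (Z2 0))
    -- mutual independence of `N¹`, `N²`, `{Z¹_n}`, `{Z²_n}`
    (hindep : iIndep
      (![MeasurableSpace.comap (fun ω => fun t : ℝ => N1 t ω) inferInstance,
         MeasurableSpace.comap (fun ω => fun t : ℝ => N2 t ω) inferInstance,
         MeasurableSpace.comap (fun ω => fun n : ℕ => Z1 n ω) inferInstance,
         MeasurableSpace.comap (fun ω => fun n : ℕ => Z2 n ω) inferInstance]) μ)
    -- finite exponential moments of order `ε`
    (ε : ℝ) (hε : 0 < ε)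
    (hexpℓ : Integrable (fun ω => Real.exp (ε * ℓ (Z1 0 ω))) μ)
    (hexpZ2 : Integrable (fun ω => Real.exp (ε * Z2 0 ω)) μ)
    -- the dynamic contagion intensity
    (lam : ℝ → Ω → ℝ)
    (hlam : ∀ t ω, lam t ω
      = β + (lam0 - β) * Real.exp (-(α * t))
        + ∑ j ∈ Finset.range (N1 t ω), Real.exp (-(α * (t - T1 j ω))) * ℓ (Z1 j ω)
        + ∑ j ∈ Finset.range (N2 t ω), Real.exp (-(α * (t - T2 j ω))) * Z2 j ω) :
    ∀ u t : ℝ, 0 ≤ u → u ≤ t → t ≤ T → t - u ≤ ε →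
      ∫⁻ ω, ENNReal.ofReal (Real.exp (∫ s in Set.Ioc u t, lam s ω)) ∂μ < ⊤ :=
  finite_exponential_moment_integrated_intensity_general (mΩ := mΩ) μ α β lam0 ρ T hα hβ hρ ℓ hℓmeas
    hℓpos N1 N2 T1 T2 Z1 Z2 hN1meas hN2meas hZ1meas hZ2meas hZ2pos hτ1 hτ2 hP1 hP2 hiid1 hid1 hiid2
    hid2 hindep ε hexpℓ hexpZ2 lam hlam
end

section
/- Between two consecutive claim arrival times, the filter π_t(λ) is dominated by the deterministic-decay process Y: for t ∈ [T^{(1)}_n ∧ T, T^{(1)}_{n+1} ∧ T), π_t(λ) ≤ β̃ + (π_{T^{(1)}_n}(λ) − β̃) e^{−α(t − T^{(1)}_n)} where β̃ = β + ρ E[Z^{(2)}]/α. -/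
/-!
By Jensen's inequality the Kushner–Stratonovich drift of `π_t(λ)` is at most `α (β̃ - π_t(λ))`.
Hence `π_t(λ) - β̃` has right derivative at most `-α (π_t(λ) - β̃)` between jumps, and Gronwall's
inequality (with `K = -α`, `ε = 0`) bounds it by `(π_{T¹_n}(λ) - β̃) e^{-α (t - T¹_n)}`.
-/

open Set Real Topology

theorem le_add_mul_exp_of_hasDerivWithinAt_le {f f' : ℝ → ℝ} {a b α c : ℝ}
    (hf : ∀ s ∈ Ico a b, HasDerivWithinAt f (f' s) (Ici a) s)
    (bound : ∀ s ∈ Ico a b, f' s ≤ α * (c - f s)) :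
    ∀ t ∈ Ico a b, f t ≤ c + (f a - c) * exp (-(α * (t - a))) := by
  rintro t ⟨hat, htb⟩
  have hsub : Icc a t ⊆ Ico a b := fun s hs => ⟨hs.1, hs.2.trans_lt htb⟩
  have hcont : ContinuousOn (fun s => f s - c) (Icc a t) := fun s hs =>
    ((hf s (hsub hs)).continuousWithinAt.mono Icc_subset_Ici_self).sub continuousWithinAt_const
  have hslope : ∀ s ∈ Ico a t, ∀ r, f' s < r →
      ∃ᶠ z in 𝓝[>] s, (z - s)⁻¹ * ((f z - c) - (f s - c)) < r := by
    intro s hs r hr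
    simp only [sub_sub_sub_cancel_right]
    exact ((hf s (hsub (Ico_subset_Icc_self hs))).mono
      (Ici_subset_Ici.2 hs.1)).liminf_right_slope_le hr
  have hgronwall := le_gronwallBound_of_liminf_deriv_right_le (K := -α) (ε := 0) hcont hslope
    le_rfl (fun s hs => by linarith [bound s (hsub (Ico_subset_Icc_self hs))]) t
    (right_mem_Icc.2 hat)
  rw [gronwallBound_ε0, neg_mul] at hgronwall
  linarith

theorem filter_dominated_between_jumps_general
    {Ω : Type*} (α β ρ mZ2 T : ℝ)
    -- jump times `T¹_n < T¹_{n+1}` of the claim arrival process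
    (Tn Tnext : Ω → ℝ)
    -- `p t ω = π_t(λ)(ω)` and `q t ω = π_t(λ²)(ω)`
    (p q : ℝ → Ω → ℝ)
    -- Jensen's inequality for the filter
    (hJensen : ∀ t ω, (p t ω) ^ 2 ≤ q t ω)
    -- the Kushner–Stratonovich dynamics of `π_t(λ)` between consecutive jumps
    (hderiv : ∀ ω, ∀ s : ℝ, Tn ω ≤ s → s < min (Tnext ω) T →
      HasDerivWithinAt (fun r => p r ω)
        (α * ((β + ρ * mZ2 / α) - p s ω) - (q s ω - (p s ω) ^ 2))
        (Set.Ici (Tn ω)) s) :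
    ∀ ω, ∀ t : ℝ, Tn ω ≤ t → t < min (Tnext ω) T →
      p t ω ≤ (β + ρ * mZ2 / α)
        + (p (Tn ω) ω - (β + ρ * mZ2 / α)) * Real.exp (-(α * (t - Tn ω))) := by
  intro ω t ht htlt
  refine le_add_mul_exp_of_hasDerivWithinAt_le (fun s hs => hderiv ω s hs.1 hs.2)
    (fun s _ => ?_) t ⟨ht, htlt⟩
  linarith [hJensen s ω]

/-- **Exponential-decay domination of the filter between consecutive claim arrivals.**
Between two consecutive claim arrival times, the filter `π_t(λ)` (denoted `p`) is dominated by
the solution of `dY_t = α(β̃ − Y_t) dt` started from the filter value at the last jump time: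
for `t ∈ [T¹_n ∧ T, T¹_{n+1} ∧ T)`,
`π_t(λ) ≤ β̃ + (π_{T¹_n}(λ) − β̃) e^{−α(t − T¹_n)}`, where `β̃ = β + ρ E[Z²]/α`.
Between jumps the filter satisfies
`dπ_t(λ) = α(β̃ − π_t(λ)) dt − (π_t(λ²) − π_t(λ)²) dt` and, by Jensen's inequality,
`π_t(λ²) ≥ π_t(λ)²` (here `q` denotes `π_t(λ²)`). -/
theorem filter_dominated_between_jumps
    {Ω : Type*} (α β ρ mZ2 T : ℝ) (hα : 0 < α) (hβ : 0 < β) (hρ : 0 < ρ) (hmZ2 : 0 ≤ mZ2)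
    (hT : 0 < T)
    -- jump times `T¹_n < T¹_{n+1}` of the claim arrival process
    (Tn Tnext : Ω → ℝ) (hTn : ∀ ω, 0 ≤ Tn ω) (hjump : ∀ ω, Tn ω < Tnext ω)
    -- `p t ω = π_t(λ)(ω)` and `q t ω = π_t(λ²)(ω)`
    (p q : ℝ → Ω → ℝ)
    -- Jensen's inequality for the filter
    (hJensen : ∀ t ω, (p t ω) ^ 2 ≤ q t ω)
    -- the Kushner–Stratonovich dynamics of `π_t(λ)` between consecutive jumps
    (hderiv : ∀ ω, ∀ s : ℝ, Tn ω ≤ s → s < min (Tnext ω) T →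
      HasDerivWithinAt (fun r => p r ω)
        (α * ((β + ρ * mZ2 / α) - p s ω) - (q s ω - (p s ω) ^ 2))
        (Set.Ici (Tn ω)) s) :
    ∀ ω, ∀ t : ℝ, Tn ω ≤ t → t < min (Tnext ω) T →
      p t ω ≤ (β + ρ * mZ2 / α)
        + (p (Tn ω) ω - (β + ρ * mZ2 / α)) * Real.exp (-(α * (t - Tn ω))) :=
  filter_dominated_between_jumps_general α β ρ mZ2 T Tn Tnext p q hJensen hderiv
end

section
/- For proportional reinsurance Φ(z,u) = uz, u ∈ [0,1], with expected-value-principle premium q^u_t = (1+θ_R) E[Z^{(1)}] π_{t−}(λ)(1 − u_t), the optimal retention u*_t equals 0 (full reinsurance) if θ_R < θ^F_t, equals 1 (no reinsurance) if θ_R > θ^N_t, and otherwise is the unique solution ū ∈ (0,1) of (1+θ_R) E[Z^{(1)}] = ∫_0^∞ ((w+θ(z))/w) z e^{−ηe^{r(T−t)}z(1−u)} F^{(1)}(dz), where θ^F_t = (1/E[Z^{(1)}]) ∫_0^∞ ((W^N_{t−}+Θ^{W^N}_t(z))/W^N_{t−}) z e^{−ηe^{r(T−t)}z} F^{(1)}(dz)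 − 1 and θ^N_t = (1/E[Z^{(1)}]) ∫_0^∞ ((W^N_{t−}+Θ^{W^N}_t(z))/W^N_{t−}) z F^{(1)}(dz) − 1; moreover θ^F_t < θ^N_t. -/
open MeasureTheory Real

/-!
The driver `g` is concave in the retention `u`: its jump part `u ↦ ∫ k z (e^{-a z (1-u)} - 1)`,
with `k = w + θ` and `a = η e^{r(T-t)}`, is an integral of convex exponentials, and their tangent
lines `e^x ≥ 1 + x` give `g` the supergradient `p a (w (1+θ_R) E[Z] - H u)` at every `u ≤ 1`,
where `H u = ∫ k z z e^{-a z (1-u)}` is continuous and strictly increasing. So `g` is maximal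
on `[0,1]` at `0` if this slope is negative at `0`, at `1` if it is positive at `1`, and otherwise
at the unique zero of the slope, given by the intermediate value theorem. The thresholds
`θ^F < θ^N` are the values of `θ_R` at which the slope vanishes at `0` and at `1`.
-/

lemma integral_pos_of_ae_pos {α : Type*} [MeasurableSpace α] {μ : Measure α} [NeZero μ]
    {f : α → ℝ} (hfi : Integrable f μ) (hf : ∀ᵐ x ∂μ, 0 < f x) : 0 < ∫ x, f x ∂μ := by
  rw [integral_pos_iff_support_of_nonneg_ae (hf.mono fun _ h => h.le) hfi, pos_iff_ne_zero]
  intro h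
  obtain ⟨x, hx, hx0⟩ := (hf.and (measure_eq_zero_iff_ae_notMem.1 h)).exists
  exact hx0 hx.ne'

lemma abs_exp_neg_sub_one_le {x : ℝ} (hx : 0 ≤ x) : |exp (-x) - 1| ≤ x := by
  rw [abs_sub_comm, abs_of_nonneg (by simpa using hx)]
  linarith [add_one_le_exp (-x)]

noncomputable def jumpIntegral (μ : Measure ℝ) (k : ℝ → ℝ) (a u : ℝ) : ℝ :=
  ∫ z, k z * (exp (-(a * z * (1 - u))) - 1) ∂μ

/-- The `u`-derivative of `jumpIntegral μ k a`, divided by `a`. -/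
noncomputable def jumpMarginal (μ : Measure ℝ) (k : ℝ → ℝ) (a u : ℝ) : ℝ :=
  ∫ z, k z * z * exp (-(a * z * (1 - u))) ∂μ

section

variable {μ : Measure ℝ} {k : ℝ → ℝ} {a u : ℝ}

lemma exp_neg_mul_le_one {z : ℝ} (ha : 0 ≤ a) (hz : 0 ≤ z) (hu : u ≤ 1) :
    exp (-(a * z * (1 - u))) ≤ 1 := by
  rw [exp_le_one_iff, neg_nonpos]
  exact mul_nonneg (mul_nonneg ha hz) (sub_nonneg.2 hu)

lemma mul_exp_neg_sub_one_add_le {c z v : ℝ} (hc : 0 ≤ c) :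
    c * (exp (-(a * z * (1 - v))) - 1) + a * (u - v) * (c * z * exp (-(a * z * (1 - v))))
      ≤ c * (exp (-(a * z * (1 - u))) - 1) := by
  have hsplit : exp (-(a * z * (1 - u))) = exp (-(a * z * (1 - v))) * exp (a * z * (u - v)) := by
    rw [← exp_add]; ring_nf
  have := mul_le_mul_of_nonneg_left (add_one_le_exp (a * z * (u - v)))
    (mul_nonneg hc (exp_pos (-(a * z * (1 - v)))).le)
  rw [hsplit]
  linarith

variable (hkz : Integrable (fun z => k z * z) μ) (hz : ∀ᵐ z ∂μ, 0 < z)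
include hkz hz

lemma integrable_jumpMarginal (ha : 0 ≤ a) (hu : u ≤ 1) :
    Integrable (fun z => k z * z * exp (-(a * z * (1 - u)))) μ := by
  refine hkz.mul_bdd (c := 1) (by fun_prop) ?_
  filter_upwards [hz] with z hz
  rw [norm_of_nonneg (exp_pos _).le]
  exact exp_neg_mul_le_one ha hz.le hu

lemma integrable_jumpIntegral (hk : Measurable k) (ha : 0 ≤ a) (hu : u ≤ 1) :
    Integrable (fun z => k z * (exp (-(a * z * (1 - u))) - 1)) μ := by
  refine ((hkz.const_mul (a * (1 - u))).norm).mono' (by fun_prop) ?_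
  filter_upwards [hz] with z hz
  have hx : 0 ≤ a * z * (1 - u) := mul_nonneg (mul_nonneg ha hz.le) (sub_nonneg.2 hu)
  rw [norm_mul, norm_mul, norm_of_nonneg (mul_nonneg ha (sub_nonneg.2 hu)), norm_mul,
    norm_eq_abs z, abs_of_pos hz, norm_eq_abs]
  calc ‖k z‖ * |exp (-(a * z * (1 - u))) - 1| ≤ ‖k z‖ * (a * z * (1 - u)) :=
        mul_le_mul_of_nonneg_left (abs_exp_neg_sub_one_le hx) (norm_nonneg _)
    _ = a * (1 - u) * (‖k z‖ * z) := by ring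

lemma jumpIntegral_add_le (hk : Measurable k) (hk0 : ∀ᵐ z ∂μ, 0 ≤ k z) (ha : 0 ≤ a) {v : ℝ}
    (hu : u ≤ 1) (hv : v ≤ 1) :
    jumpIntegral μ k a v + a * (u - v) * jumpMarginal μ k a v ≤ jumpIntegral μ k a u := by
  have hiv := integrable_jumpIntegral hkz hz hk ha hv
  have hmv := (integrable_jumpMarginal hkz hz ha hv).const_mul (a * (u - v))
  rw [jumpIntegral, jumpMarginal, ← integral_const_mul, ← integral_add hiv hmv]
  refine integral_mono_ae (hiv.add hmv) (integrable_jumpIntegral hkz hz hk ha hu) ?_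
  filter_upwards [hk0] with z hkz0
  exact mul_exp_neg_sub_one_add_le hkz0

lemma jumpMarginal_strictMonoOn [NeZero μ] (hk : ∀ᵐ z ∂μ, 0 < k z) (ha : 0 < a) :
    StrictMonoOn (jumpMarginal μ k a) (Set.Iic 1) := by
  intro u hu v hv huv
  have hiu := integrable_jumpMarginal hkz hz ha.le hu
  have hiv := integrable_jumpMarginal hkz hz ha.le hv
  rw [jumpMarginal, jumpMarginal, ← sub_pos, ← integral_sub hiv hiu]
  refine integral_pos_of_ae_pos (hiv.sub hiu) ?_
  filter_upwards [hk, hz] with z hk hz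
  have : exp (-(a * z * (1 - u))) < exp (-(a * z * (1 - v))) :=
    exp_lt_exp.2 (by nlinarith [mul_pos ha hz])
  nlinarith [mul_pos hk hz]

lemma continuousOn_jumpMarginal (ha : 0 ≤ a) : ContinuousOn (jumpMarginal μ k a) (Set.Iic 1) := by
  refine continuousOn_of_dominated (fun u hu => (integrable_jumpMarginal hkz hz ha hu).1)
    (fun u hu => ?_) hkz.norm (ae_of_all _ fun z => by fun_prop)
  filter_upwards [hz] with z hz
  rw [norm_mul, norm_of_nonneg (exp_pos _).le]
  exact mul_le_of_le_one_right (norm_nonneg _) (exp_neg_mul_le_one ha hz.le hu)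

lemma isMaxOn_of_jumpMarginal_slope (hk : Measurable k) (hk0 : ∀ᵐ z ∂μ, 0 ≤ k z) (ha : 0 ≤ a)
    {p c v : ℝ} {g : ℝ → ℝ} {s : Set ℝ} (hp : 0 ≤ p)
    (hg : ∀ u, g u = -(p * a * c * (1 - u)) - p * jumpIntegral μ k a u)
    (hs : s ⊆ Set.Iic 1) (hv : v ∈ s)
    (hslope : ∀ u ∈ s, (c - jumpMarginal μ k a v) * (u - v) ≤ 0) :
    IsMaxOn g s v := by
  refine isMaxOn_iff.2 fun u hu => ?_
  have htan := jumpIntegral_add_le hkz hz hk hk0 ha (hs hu) (hs hv)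
  rw [hg, hg]
  nlinarith [mul_le_mul_of_nonneg_left htan hp,
    mul_le_mul_of_nonneg_left (hslope u hu) (mul_nonneg hp ha)]

end

theorem optimal_proportional_reinsurance_general
    (η r T t w p θR : ℝ) (hη : 0 < η) (hw : 0 < w) (hp : 0 < p)
    (F1 : Measure ℝ) [IsProbabilityMeasure F1]
    -- the claim sizes are strictly positive with finite exponential moments
    (hz : ∀ᵐ z ∂F1, 0 < z)
    (hmeanpos : 0 < ∫ z, z ∂F1)
    (θ : ℝ → ℝ) (hθmeas : Measurable θ)
    -- `w + θ(z) > 0` (positivity of the value process after a jump)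
    (hwθ : ∀ᵐ z ∂F1, 0 < w + θ z)
    -- integrability of the relevant integrands
    (hint : Integrable (fun z => (w + θ z) * z) F1)
    -- the driver of the BSDE as a function of the retention level `u`
    (g : ℝ → ℝ)
    (hg : ∀ u, g u
      = -(w * η * Real.exp (r * (T - t)) * ((1 + θR) * (∫ z, z ∂F1) * p * (1 - u)))
        - p * ∫ z, (w + θ z)
            * (Real.exp (-(η * Real.exp (r * (T - t)) * z * (1 - u))) - 1) ∂F1) :
    -- the thresholds are ordered: `θ^F < θ^N`
    ((1 / ∫ z, z ∂F1)
        * (∫ z, ((w + θ z) / w) * z * Real.exp (-(η * Real.exp (r * (T - t)) * z)) ∂F1) - 1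
      < (1 / ∫ z, z ∂F1) * (∫ z, ((w + θ z) / w) * z ∂F1) - 1) ∧
    -- full reinsurance below `θ^F`
    (θR < (1 / ∫ z, z ∂F1)
        * (∫ z, ((w + θ z) / w) * z * Real.exp (-(η * Real.exp (r * (T - t)) * z)) ∂F1) - 1 →
      IsMaxOn g (Set.Icc (0 : ℝ) 1) 0) ∧
    -- null reinsurance above `θ^N`
    ((1 / ∫ z, z ∂F1) * (∫ z, ((w + θ z) / w) * z ∂F1) - 1 < θR →
      IsMaxOn g (Set.Icc (0 : ℝ) 1) 1) ∧
    -- in the intermediate regime, the unique interior solution of the stationarity equation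
    -- is optimal
    ((1 / ∫ z, z ∂F1)
        * (∫ z, ((w + θ z) / w) * z * Real.exp (-(η * Real.exp (r * (T - t)) * z)) ∂F1) - 1
        ≤ θR →
      θR ≤ (1 / ∫ z, z ∂F1) * (∫ z, ((w + θ z) / w) * z ∂F1) - 1 →
      ∃ ub ∈ Set.Icc (0 : ℝ) 1,
        ((1 + θR) * (∫ z, z ∂F1)
          = ∫ z, ((w + θ z) / w) * z
              * Real.exp (-(η * Real.exp (r * (T - t)) * z * (1 - ub))) ∂F1) ∧
        IsMaxOn g (Set.Icc (0 : ℝ) 1) ub ∧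
        ∀ v ∈ Set.Icc (0 : ℝ) 1,
          ((1 + θR) * (∫ z, z ∂F1)
            = ∫ z, ((w + θ z) / w) * z
                * Real.exp (-(η * Real.exp (r * (T - t)) * z * (1 - v))) ∂F1) → v = ub) := by
  set a := η * exp (r * (T - t))
  set M := ∫ z, z ∂F1
  set H := jumpMarginal F1 (fun z => w + θ z) a
  have ha : 0 < a := by positivity
  have hH : ∀ u, ∫ z, ((w + θ z) / w) * z * exp (-(a * z * (1 - u))) ∂F1 = H u / w := fun u => by
    simp only [H, jumpMarginal, ← integral_div]; congr 1 with z; ring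
  have hH0 : ∫ z, ((w + θ z) / w) * z * exp (-(a * z)) ∂F1 = H 0 / w := by simpa using hH 0
  have hH1 : ∫ z, ((w + θ z) / w) * z ∂F1 = H 1 / w := by simpa using hH 1
  have hHmono : StrictMonoOn H (Set.Iic 1) := jumpMarginal_strictMonoOn hint hz hwθ ha
  have hmax : ∀ v ∈ Set.Icc (0 : ℝ) 1,
      (∀ u ∈ Set.Icc (0 : ℝ) 1, (w * ((1 + θR) * M) - H v) * (u - v) ≤ 0) →
      IsMaxOn g (Set.Icc (0 : ℝ) 1) v :=
    fun v hv => isMaxOn_of_jumpMarginal_slope hint hz (by fun_prop) (hwθ.mono fun _ h => h.le)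
      ha.le hp.le (fun u => by rw [hg, mul_assoc w η, jumpIntegral]; ring)
      (fun _ hu => hu.2) hv
  -- `θ^F = f (H 0)`, `θ^N = f (H 1)` and `θR = f (w (1 + θR) M)`
  set f : ℝ → ℝ := fun X => 1 / M * (X / w) - 1
  have hf : StrictMono f := fun X Y h => by simp only [f]; gcongr
  have hθR : θR = f (w * ((1 + θR) * M)) := by simp only [f]; field_simp; ring
  rw [hH0, hH1]
  refine ⟨hf (hHmono (by simp) (by simp) one_pos), fun h => ?_, fun h => ?_, fun hF hN => ?_⟩
  · rw [hθR] at h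
    exact hmax 0 (by simp) fun u hu => by nlinarith [hf.lt_iff_lt.1 h, hu.1]
  · rw [hθR] at h
    exact hmax 1 (by simp) fun u hu => by nlinarith [hf.lt_iff_lt.1 h, hu.2]
  · rw [hθR] at hF hN
    have hHcont : ContinuousOn H (Set.Iic 1) := continuousOn_jumpMarginal hint hz ha.le
    obtain ⟨ub, hub, hHub⟩ := intermediate_value_Icc zero_le_one
      (hHcont.mono Set.Icc_subset_Iic_self)
      ⟨hf.le_iff_le.1 hF, hf.le_iff_le.1 hN⟩
    have hstat : ∀ v, (1 + θR) * M = ∫ z, ((w + θ z) / w) * z * exp (-(a * z * (1 - v))) ∂F1 ↔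
        H v = w * ((1 + θR) * M) := fun v => by
      rw [hH, eq_div_iff hw.ne', mul_comm, eq_comm]
    refine ⟨ub, hub, (hstat ub).2 hHub, hmax ub hub fun u _ => by simp [hHub], fun v hv hv' => ?_⟩
    exact (hHmono.injOn.mono Set.Icc_subset_Iic_self) hv hub (((hstat v).1 hv').trans hHub.symm)

/-- **Optimal proportional reinsurance under the expected value principle.**
For proportional reinsurance `Φ(z,u) = uz`, `u ∈ [0,1]`, with premium
`q^u = (1+θ_R) E[Z¹] π_{t−}(λ)(1−u)`, there are two thresholds `θ^F < θ^N` (depending on the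
BSDE solution `(W^N, Θ^{W^N})`, here `w = W^N_{t−}` and `θ = Θ^{W^N}_t(·)`) such that the
optimal retention is `0` (full reinsurance) if `θ_R < θ^F`, `1` (no reinsurance) if
`θ_R > θ^N`, and otherwise the unique `ū ∈ (0,1)` solving
`(1+θ_R)E[Z¹] = ∫ ((w+θ(z))/w) z e^{−ηe^{r(T−t)}z(1−ū)} F¹(dz)`.
Here the driver is
`g(u) = −wηe^{r(T−t)}(1+θ_R)E[Z¹]p(1−u) − p∫ (w+θ(z))(e^{−ηe^{r(T−t)}z(1−u)}−1) F¹(dz)`. -/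
theorem optimal_proportional_reinsurance
    (η r T t w p θR : ℝ) (hη : 0 < η) (ht : t ≤ T) (hw : 0 < w) (hp : 0 < p) (hθR : 0 < θR)
    (F1 : Measure ℝ) [IsProbabilityMeasure F1]
    -- the claim sizes are strictly positive with finite exponential moments
    (hz : ∀ᵐ z ∂F1, 0 < z)
    (hmean : Integrable (fun z : ℝ => z) F1) (hmeanpos : 0 < ∫ z, z ∂F1)
    (θ : ℝ → ℝ) (hθmeas : Measurable θ)
    -- `w + θ(z) > 0` (positivity of the value process after a jump)
    (hwθ : ∀ᵐ z ∂F1, 0 < w + θ z)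
    -- integrability of the relevant integrands
    (hint : Integrable (fun z => (w + θ z) * z) F1)
    (hint' : Integrable (fun z => w + θ z) F1)
    -- the driver of the BSDE as a function of the retention level `u`
    (g : ℝ → ℝ)
    (hg : ∀ u, g u
      = -(w * η * Real.exp (r * (T - t)) * ((1 + θR) * (∫ z, z ∂F1) * p * (1 - u)))
        - p * ∫ z, (w + θ z)
            * (Real.exp (-(η * Real.exp (r * (T - t)) * z * (1 - u))) - 1) ∂F1) :
    -- the thresholds are ordered: `θ^F < θ^N`
    ((1 / ∫ z, z ∂F1)
        * (∫ z, ((w + θ z) / w) * z * Real.exp (-(η * Real.exp (r * (T - t)) * z)) ∂F1) - 1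
      < (1 / ∫ z, z ∂F1) * (∫ z, ((w + θ z) / w) * z ∂F1) - 1) ∧
    -- full reinsurance below `θ^F`
    (θR < (1 / ∫ z, z ∂F1)
        * (∫ z, ((w + θ z) / w) * z * Real.exp (-(η * Real.exp (r * (T - t)) * z)) ∂F1) - 1 →
      IsMaxOn g (Set.Icc (0 : ℝ) 1) 0) ∧
    -- null reinsurance above `θ^N`
    ((1 / ∫ z, z ∂F1) * (∫ z, ((w + θ z) / w) * z ∂F1) - 1 < θR →
      IsMaxOn g (Set.Icc (0 : ℝ) 1) 1) ∧
    -- in the intermediate regime, the unique interior solution of the stationarity equation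
    -- is optimal
    ((1 / ∫ z, z ∂F1)
        * (∫ z, ((w + θ z) / w) * z * Real.exp (-(η * Real.exp (r * (T - t)) * z)) ∂F1) - 1
        ≤ θR →
      θR ≤ (1 / ∫ z, z ∂F1) * (∫ z, ((w + θ z) / w) * z ∂F1) - 1 →
      ∃ ub ∈ Set.Icc (0 : ℝ) 1,
        ((1 + θR) * (∫ z, z ∂F1)
          = ∫ z, ((w + θ z) / w) * z
              * Real.exp (-(η * Real.exp (r * (T - t)) * z * (1 - ub))) ∂F1) ∧
        IsMaxOn g (Set.Icc (0 : ℝ) 1) ub ∧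
        ∀ v ∈ Set.Icc (0 : ℝ) 1,
          ((1 + θR) * (∫ z, z ∂F1)
            = ∫ z, ((w + θ z) / w) * z
                * Real.exp (-(η * Real.exp (r * (T - t)) * z * (1 - v))) ∂F1) → v = ub) :=
  optimal_proportional_reinsurance_general η r T t w p θR hη hw hp F1 hz hmeanpos θ hθmeas hwθ hint
    g hg
end
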